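/- arXiv:1507.08327 — 2 statements merged into one kernel-verified Lean document; each statement's English description precedes it below -/
import Mathlib

section
/- Combined Blei–Popa–Sinnamon inequality: let (X₁,μ₁),…,(Xₙ,μₙ) be σ-finite measure spaces with product (X,μ). Let 0 < k < n, M = C(n,k), and let S₁,…,S_M enumerate the size-k subsets of {1,…,n}. Let q₁,…,q_M be positive, possibly infinite, exponents with Σ_{i=1}^M 1/qᵢ ≤ 1, and set ε = 1 − Σ_{i=1}^M 1/qᵢ ≥ 0. Let c₁,…,c_M be nonnegative numbers such that for each j ∈ {1,…,n}, Σ_{i : Sᵢ ∋ j} cᵢ = 1, and define pᵢ by 1/pᵢ = 1/qᵢ + cᵢ ε. Then for any nonnegative measurable functions f₁,…,f_M on X, ∫_X f₁⋯f_M dμ ≤ ∏_{i=1}^M ( ∫_{Sᵢ} ( ∫_{∼Sᵢ} fᵢ^{qᵢ} )^{pᵢ/qᵢ} )^{1/pᵢ}, where ∼Sᵢ = {1,…,n} \ Sᵢ and, for E ⊂ {1,…,n}, ∫_E denotes integration over ∏_{j∈E} Xⱼ with the product of the measures μⱼ, j ∈ E. -/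
open MeasureTheory
open scoped ENNReal NNReal

/-- Combine a point of `∏_{j ∈ E} X j` and a point of `∏_{j ∈ Eᶜ} X j` into a point of
the full product `∏ j, X j`. -/
def glue {n : ℕ} {X : Fin n → Type*} (E : Finset (Fin n))
    (a : ∀ j : E, X j) (b : ∀ j : (Eᶜ : Finset (Fin n)), X j) : ∀ j, X j :=
  fun j => if h : j ∈ E then a ⟨j, h⟩ else b ⟨j, Finset.mem_compl.mpr h⟩

/-- The `L^p` "norm" (for `0 < p ≤ ∞`) of a nonnegative function, the exponent `∞`
being interpreted as the essential supremum. -/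
noncomputable def eNorm {α : Type*} [MeasurableSpace α] (μ : Measure α) (p : ℝ≥0∞)
    (g : α → ℝ≥0∞) : ℝ≥0∞ :=
  if p = ∞ then essSup g μ else (∫⁻ a, g a ^ p.toReal ∂μ) ^ (1 / p.toReal)

/-!
Write `Fᵢ` for the inner `L^{qᵢ}` norm of `fᵢ` over the variables in `∼Sᵢ`, a function of the
variables in `Sᵢ` only, and `Aᵢ` for its outer `L^{pᵢ}` norm. Since `pᵢ (cᵢ ε + 1/qᵢ) = 1`,
almost everywhere `fᵢ = (Fᵢ^{pᵢ})^{cᵢ ε} (Fᵢ^{pᵢ - qᵢ} fᵢ^{qᵢ})^{1/qᵢ}`. Hölder's inequality on the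
whole product with the exponents `ε, 1/q₁, …, 1/q_M` bounds `∫ ∏ fᵢ` by
`(∫ ∏ Fᵢ^{pᵢ cᵢ})^ε ∏ᵢ (∫ Fᵢ^{pᵢ - qᵢ} fᵢ^{qᵢ})^{1/qᵢ}`. Integrating first over `∼Sᵢ` bounds the
`i`-th Hölder factor by `(∫_{Sᵢ} Fᵢ^{pᵢ})^{1/qᵢ} = Aᵢ^{pᵢ/qᵢ}`, and Finner's inequality
(this is where `Σ_{Sᵢ ∋ j} cᵢ = 1` enters) bounds the first factor by `∏ᵢ Aᵢ^{pᵢ cᵢ ε}`; the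
exponents of `Aᵢ` add up to `1`. A factor with `pᵢ = ∞` (hence `qᵢ = ∞` and `cᵢ ε = 0`) is
bounded by `Aᵢ` almost everywhere, and the cases where some `Aᵢ` is `0` or `∞` are settled first,
because the factorization needs `Fᵢ < ∞` almost everywhere.
-/

open Function Finset

namespace ENNReal

theorem rpow_mul_rpow_le_rpow_add (x : ℝ≥0∞) (a b : ℝ) : x ^ a * x ^ b ≤ x ^ (a + b) := by
  rcases eq_or_ne x 0 with rfl | hx0
  · rcases lt_trichotomy a 0 with ha | rfl | ha
    · rcases lt_trichotomy b 0 with hb | rfl | hb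
      · simp [zero_rpow_of_neg ha, zero_rpow_of_neg hb,
          zero_rpow_of_neg (add_neg ha hb)]
      · simp
      · simp [zero_rpow_of_pos hb]
    · simp
    · simp [zero_rpow_of_pos ha]
  rcases eq_or_ne x ∞ with rfl | hxt
  · rcases lt_trichotomy a 0 with ha | rfl | ha
    · simp [top_rpow_of_neg ha]
    · simp
    · rcases lt_trichotomy b 0 with hb | rfl | hb
      · simp [top_rpow_of_neg hb]
      · simp
      · simp [top_rpow_of_pos ha, top_rpow_of_pos hb,
          top_rpow_of_pos (add_pos ha hb)]
  · exact (rpow_add _ _ hx0 hxt).ge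

variable {p q s : ℝ≥0∞}

theorem eq_top_iff_of_inv_eq_inv_add (hp : p⁻¹ = q⁻¹ + s) : p = ∞ ↔ q = ∞ ∧ s = 0 := by
  rw [← ENNReal.inv_eq_zero, hp, add_eq_zero, ENNReal.inv_eq_zero]

theorem ne_zero_of_inv_eq_inv_add (hq : q ≠ 0) (hs : s ≠ ∞) (hp : p⁻¹ = q⁻¹ + s) : p ≠ 0 := by
  rintro rfl
  simp [hq, hs, eq_comm] at hp

theorem coe_mul_one_sub_ne_top (c : ℝ≥0) (x : ℝ≥0∞) : (c : ℝ≥0∞) * (1 - x) ≠ ∞ :=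
  mul_ne_top coe_ne_top (ne_top_of_le_ne_top one_ne_top tsub_le_self)

theorem toReal_mul_toReal_inv_add (hq : q ≠ 0) (hs : s ≠ ∞) (hp : p⁻¹ = q⁻¹ + s)
    (hp' : p ≠ ∞) : p.toReal * ((q⁻¹).toReal + s.toReal) = 1 := by
  rw [← toReal_add (inv_ne_top.2 hq) hs, ← hp, ← toReal_mul,
    ENNReal.mul_inv_cancel (ne_zero_of_inv_eq_inv_add hq hs hp) hp', toReal_one]

theorem rpow_rpow_mul_mul_rpow_rpow_inv {x y : ℝ≥0∞} (hy0 : y ≠ 0) (hy : y ≠ ∞) {q r t : ℝ}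
    (hq : 0 < q) (h : r * (q⁻¹ + t) = 1) : (y ^ r) ^ t * (y ^ (r - q) * x ^ q) ^ q⁻¹ = x := by
  have hexp : r * t + (r - q) * q⁻¹ = 0 := by
    have : (r - q) * q⁻¹ = r * q⁻¹ - 1 := by field_simp
    linarith
  rw [mul_rpow_of_nonneg _ _ (inv_nonneg.2 hq.le), ← rpow_mul, ← rpow_mul, ← rpow_mul,
    mul_inv_cancel₀ hq.ne', rpow_one, ← mul_assoc, ← rpow_add _ _ hy0 hy, hexp, rpow_zero,
    one_mul]

end ENNReal

theorem Measurable.essSup_prod_right {α β : Type*} [MeasurableSpace α] [MeasurableSpace β]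
    {ν : Measure β} [SFinite ν] {g : α → β → ℝ≥0∞} (hg : Measurable (uncurry g)) :
    Measurable fun a => essSup (g a) ν := by
  simp_rw [essSup_eq_sInf]
  refine measurable_of_Iio fun t => ?_
  -- `essSup (g a) < t` iff some rational `r < t` bounds `g a` almost everywhere
  have hiff : (fun a => sInf {c | ν {b | c < g a b} = 0}) ⁻¹' Set.Iio t =
      ⋃ r : ℚ, {a | (Real.toNNReal r : ℝ≥0∞) < t ∧
        ν {b | (Real.toNNReal r : ℝ≥0∞) < g a b} = 0} := by
    ext a
    simp only [Set.mem_preimage, Set.mem_Iio, Set.mem_iUnion, Set.mem_ofPred_eq]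
    constructor
    · intro hlt
      obtain ⟨c, hc, hct⟩ := sInf_lt_iff.1 hlt
      obtain ⟨r, -, hcr, hrt⟩ := ENNReal.lt_iff_exists_rat_btwn.1 hct
      exact ⟨r, hrt, measure_mono_null (fun b hb => hcr.trans hb) hc⟩
    · rintro ⟨r, hrt, hr⟩
      exact lt_of_le_of_lt (sInf_le hr) hrt
  rw [hiff]
  refine MeasurableSet.iUnion fun r => MeasurableSet.const _ |>.inter ?_
  exact measurable_measure_prodMk_left (measurableSet_lt measurable_const hg)
    (measurableSet_singleton 0)

section eNorm

variable {α : Type*} [MeasurableSpace α] {ν : Measure α} {p : ℝ≥0∞} {g : α → ℝ≥0∞}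

theorem eNorm_top : eNorm ν ∞ g = essSup g ν := if_pos rfl

theorem eNorm_of_ne_top (hp : p ≠ ∞) :
    eNorm ν p g = (∫⁻ a, g a ^ p.toReal ∂ν) ^ (1 / p.toReal) := if_neg hp

theorem eNorm_rpow_toReal (hp0 : p ≠ 0) (hp : p ≠ ∞) :
    eNorm ν p g ^ p.toReal = ∫⁻ a, g a ^ p.toReal ∂ν := by
  rw [eNorm_of_ne_top hp, ← ENNReal.rpow_mul, one_div,
    inv_mul_cancel₀ (ENNReal.toReal_pos hp0 hp).ne', ENNReal.rpow_one]

theorem Measurable.eNorm_prod_right {β : Type*} [MeasurableSpace β] {μ : Measure β} [SFinite μ]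
    {g : α → β → ℝ≥0∞} (hg : Measurable (uncurry g)) :
    Measurable fun a => eNorm μ p (g a) := by
  unfold eNorm
  split_ifs
  · exact hg.essSup_prod_right
  · exact ((hg.pow_const _).lintegral_prod_right).pow_const _

theorem ae_le_eNorm_top : ∀ᵐ a ∂ν, g a ≤ eNorm ν ∞ g :=
  eNorm_top (g := g) ▸ ENNReal.ae_le_essSup g

theorem ae_eq_zero_of_eNorm_eq_zero (hp0 : p ≠ 0) (hg : Measurable g) (h : eNorm ν p g = 0) :
    ∀ᵐ a ∂ν, g a = 0 := by
  by_cases hp : p = ∞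
  · rw [hp, eNorm_top] at h
    exact ENNReal.essSup_eq_zero_iff.1 h
  · have hpos := ENNReal.toReal_pos hp0 hp
    have hint : ∫⁻ a, g a ^ p.toReal ∂ν = 0 := by
      rw [← eNorm_rpow_toReal hp0 hp, h, ENNReal.zero_rpow_of_pos hpos]
    filter_upwards [(lintegral_eq_zero_iff (hg.pow_const _)).1 hint] with a ha
    exact (ENNReal.rpow_eq_zero_iff_of_pos hpos).1 ha

theorem ae_ne_top_of_eNorm_ne_top (hp0 : p ≠ 0) (hp : p ≠ ∞) (hg : Measurable g)
    (h : eNorm ν p g ≠ ∞) : ∀ᵐ a ∂ν, g a ≠ ∞ := by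
  have hpos := ENNReal.toReal_pos hp0 hp
  have hint : ∫⁻ a, g a ^ p.toReal ∂ν ≠ ∞ := by
    rw [← eNorm_rpow_toReal hp0 hp]
    exact ENNReal.rpow_ne_top_of_nonneg hpos.le h
  filter_upwards [ae_lt_top (hg.pow_const _) hint] with a ha hga
  simp [hga, ENNReal.top_rpow_of_pos hpos] at ha

end eNorm

theorem lintegral_rpow_mul_prod_rpow_le {α ι : Type*} [MeasurableSpace α] [Fintype ι]
    {ν : Measure α} {V : α → ℝ≥0∞} {U : ι → α → ℝ≥0∞} (hV : AEMeasurable V ν)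
    (hU : ∀ i, AEMeasurable (U i) ν) {ε : ℝ} {a : ι → ℝ} (hε : 0 ≤ ε) (ha : ∀ i, 0 ≤ a i)
    (hεa : ε + ∑ i, a i = 1) :
    ∫⁻ x, V x ^ ε * ∏ i, U i x ^ a i ∂ν ≤ (∫⁻ x, V x ∂ν) ^ ε * ∏ i, (∫⁻ x, U i x ∂ν) ^ a i := by
  simpa only [prod_insertNone, Option.elim] using
    ENNReal.lintegral_prod_norm_pow_le (μ := ν) (insertNone univ)
      (f := fun o => o.elim V U) (p := fun o => o.elim ε a)
      (fun o _ => by cases o <;> [exact hV; exact hU _])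
      (by simpa only [sum_insertNone, Option.elim] using hεa)
      (fun o _ => by cases o <;> [exact hε; exact ha _])

section Finner

variable {δ : Type*} [DecidableEq δ] {π : δ → Type*}

theorem DependsOn.apply_updateFinset_of_disjoint {β : Type*} {g : (∀ j, π j) → β}
    {s t : Finset δ} (hg : DependsOn g s) (hst : Disjoint s t) (x : ∀ j, π j)
    (y : ∀ j : t, π j) : g (Function.updateFinset x t y) = g x :=
  hg fun _ hj => dif_neg (disjoint_left.1 hst hj)

variable [∀ j, MeasurableSpace (π j)] {μ : ∀ j, Measure (π j)}

theorem DependsOn.lmarginal {g : (∀ j, π j) → ℝ≥0∞} {s : Set δ} (hg : DependsOn g s)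
    (t : Finset δ) : DependsOn (∫⋯∫⁻_t, g ∂μ) s := fun x y hxy =>
  lintegral_congr fun z => hg fun j hj => by
    simp only [Function.updateFinset]
    split_ifs
    · rfl
    · exact hxy j hj

theorem lmarginal_mul_of_dependsOn {g h : (∀ j, π j) → ℝ≥0∞} {s t : Finset δ}
    (hg : DependsOn g s) (hh : Measurable h) (hst : Disjoint s t) (x : ∀ j, π j) :
    (∫⋯∫⁻_t, (fun z => g z * h z) ∂μ) x = g x * (∫⋯∫⁻_t, h ∂μ) x := by
  simp only [lmarginal, hg.apply_updateFinset_of_disjoint hst]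
  exact lintegral_const_mul _ (hh.comp measurable_updateFinset)

variable {ι : Type*} [Fintype ι] {S : ι → Finset δ} {c : ι → ℝ}

/-- Hölder's inequality in the variable `j`; the factors not involving it are constants. -/
theorem lintegral_update_prod_rpow_le {H : ι → (∀ j, π j) → ℝ≥0∞} (hH : ∀ i, Measurable (H i))
    (hHS : ∀ i, DependsOn (H i) (S i)) (hc0 : ∀ i, 0 ≤ c i) {j : δ}
    (hcj : ∑ i with j ∈ S i, c i = 1) (x : ∀ j, π j) :
    ∫⁻ y, ∏ i, H i (update x j y) ^ c i ∂μ j ≤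
      ∏ i, (∫⋯∫⁻_({j} ∩ S i), H i ∂μ) x ^ c i := by
  have hout : ∀ i ∈ univ.filter (fun i => j ∉ S i), ∀ y,
      H i (update x j y) = (∫⋯∫⁻_({j} ∩ S i), H i ∂μ) x := by
    intro i hi y
    have hjS := (mem_filter.1 hi).2
    rw [singleton_inter_of_notMem hjS, lmarginal_empty]
    exact hHS i fun k hk => update_of_ne (by rintro rfl; exact hjS hk) _ _
  have hin : ∀ i ∈ univ.filter (fun i => j ∈ S i),
      (∫⋯∫⁻_({j} ∩ S i), H i ∂μ) x = ∫⁻ y, H i (update x j y) ∂μ j := by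
    intro i hi
    rw [singleton_inter_of_mem (mem_filter.1 hi).2, lmarginal_singleton]
  calc ∫⁻ y, ∏ i, H i (update x j y) ^ c i ∂μ j
      = ∫⁻ y, (∏ i with j ∈ S i, H i (update x j y) ^ c i) *
          ∏ i with j ∉ S i, (∫⋯∫⁻_({j} ∩ S i), H i ∂μ) x ^ c i ∂μ j := by
        refine lintegral_congr fun y => ?_
        rw [← prod_filter_mul_prod_filter_not univ (fun i => j ∈ S i)]
        exact congrArg _ (prod_congr rfl fun i hi => by rw [hout i hi y])
    _ = (∫⁻ y, ∏ i with j ∈ S i, H i (update x j y) ^ c i ∂μ j) *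
          ∏ i with j ∉ S i, (∫⋯∫⁻_({j} ∩ S i), H i ∂μ) x ^ c i :=
        lintegral_mul_const _ <| Finset.measurable_prod _ fun i _ =>
          ((hH i).comp (measurable_update x)).pow_const _
    _ ≤ (∏ i with j ∈ S i, (∫⁻ y, H i (update x j y) ∂μ j) ^ c i) *
          ∏ i with j ∉ S i, (∫⋯∫⁻_({j} ∩ S i), H i ∂μ) x ^ c i := by
        gcongr
        exact ENNReal.lintegral_prod_norm_pow_le _
          (fun i _ => ((hH i).comp (measurable_update x)).aemeasurable) hcj (fun i _ => hc0 i)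
    _ = ∏ i, (∫⋯∫⁻_({j} ∩ S i), H i ∂μ) x ^ c i := by
        rw [← prod_filter_mul_prod_filter_not univ (fun i => j ∈ S i)]
        exact congrArg (· * _) (prod_congr rfl fun i hi => by rw [hin i hi])

variable [∀ j, SigmaFinite (μ j)]

/-- Finner's inequality, integrating out the coordinates in `A` one at a time. -/
theorem lmarginal_prod_rpow_le {G : ι → (∀ j, π j) → ℝ≥0∞} (hG : ∀ i, Measurable (G i))
    (hGS : ∀ i, DependsOn (G i) (S i)) (hc0 : ∀ i, 0 ≤ c i) {A : Finset δ}
    (hc : ∀ j ∈ A, ∑ i with j ∈ S i, c i = 1) (x : ∀ j, π j) :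
    (∫⋯∫⁻_A, (fun z => ∏ i, G i z ^ c i) ∂μ) x ≤ ∏ i, (∫⋯∫⁻_(A ∩ S i), G i ∂μ) x ^ c i := by
  induction A using Finset.induction_on generalizing x with
  | empty => simp
  | insert j A hj ih =>
    have hmeas : Measurable fun z => ∏ i, G i z ^ c i :=
      Finset.measurable_prod _ fun i _ => (hG i).pow_const _
    calc (∫⋯∫⁻_(insert j A), (fun z => ∏ i, G i z ^ c i) ∂μ) x
        = ∫⁻ y, (∫⋯∫⁻_A, (fun z => ∏ i, G i z ^ c i) ∂μ) (update x j y) ∂μ j := by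
          rw [lmarginal_insert _ hmeas hj]
      _ ≤ ∫⁻ y, ∏ i, (∫⋯∫⁻_(A ∩ S i), G i ∂μ) (update x j y) ^ c i ∂μ j :=
          lintegral_mono fun y => ih (fun k hk => hc k (mem_insert_of_mem hk)) _
      _ ≤ ∏ i, (∫⋯∫⁻_({j} ∩ S i), ∫⋯∫⁻_(A ∩ S i), G i ∂μ ∂μ) x ^ c i :=
          lintegral_update_prod_rpow_le (fun i => (hG i).lmarginal μ)
            (fun i => (hGS i).lmarginal _) hc0 (hc j (mem_insert_self j A)) x
      _ = ∏ i, (∫⋯∫⁻_(insert j A ∩ S i), G i ∂μ) x ^ c i := by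
          refine prod_congr rfl fun i _ => ?_
          have hdisj : Disjoint ({j} ∩ S i) (A ∩ S i) :=
            (disjoint_singleton_left.2 hj).mono inter_subset_left inter_subset_left
          rw [insert_eq, union_inter_distrib_right, lmarginal_union μ _ (hG i) hdisj]

end Finner

section PiMeasure

variable {δ : Type*} [Fintype δ] [DecidableEq δ] {π : δ → Type*} [∀ j, MeasurableSpace (π j)]
  {μ : ∀ j, Measure (π j)} [∀ j, SigmaFinite (μ j)]

theorem ae_pi_of_ae_updateFinset {P : (∀ j, π j) → Prop} (hP : MeasurableSet {x | P x})
    (S : Finset δ) (x₀ : ∀ j, π j)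
    (h : ∀ᵐ a ∂Measure.pi (fun j : S => μ j), ∀ᵐ b ∂Measure.pi (fun j : (Sᶜ : Finset δ) => μ j),
      P (updateFinset (updateFinset x₀ S a) Sᶜ b)) :
    ∀ᵐ x ∂Measure.pi μ, P x := by
  have hN : MeasurableSet {x | ¬P x} := hP.compl
  rw [ae_iff, ← lintegral_indicator_one hN, lintegral_eq_lmarginal_univ x₀,
    ← union_compl S, lmarginal_union μ _ (measurable_one.indicator hN) disjoint_compl_right]
  refine (lintegral_congr_ae ?_).trans lintegral_zero
  filter_upwards [h] with a ha
  refine (lintegral_congr_ae ?_).trans lintegral_zero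
  filter_upwards [ha] with b hb
  simp [hb]

variable {ι : Type*} [Fintype ι] {S : ι → Finset δ} {c : ι → ℝ} {G : ι → (∀ j, π j) → ℝ≥0∞}

theorem lintegral_prod_rpow_le_prod_lmarginal (hG : ∀ i, Measurable (G i))
    (hGS : ∀ i, DependsOn (G i) (S i)) (hc0 : ∀ i, 0 ≤ c i)
    (hc : ∀ j, ∑ i with j ∈ S i, c i = 1) (x₀ : ∀ j, π j) :
    ∫⁻ x, ∏ i, G i x ^ c i ∂Measure.pi μ ≤ ∏ i, (∫⋯∫⁻_(S i), G i ∂μ) x₀ ^ c i := by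
  rw [lintegral_eq_lmarginal_univ x₀]
  simpa only [univ_inter] using lmarginal_prod_rpow_le hG hGS hc0 (A := univ) (fun j _ => hc j) x₀

theorem lintegral_prod_rpow_mul_rpow_le (hG : ∀ i, Measurable (G i))
    (hGS : ∀ i, DependsOn (G i) (S i)) (hc0 : ∀ i, 0 ≤ c i)
    (hc : ∀ j, ∑ i with j ∈ S i, c i = 1) {U : ι → (∀ j, π j) → ℝ≥0∞}
    (hU : ∀ i, Measurable (U i)) {ε : ℝ} {a : ι → ℝ} (hε : 0 ≤ ε) (ha : ∀ i, 0 ≤ a i)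
    (hεa : ε + ∑ i, a i = 1) (x₀ : ∀ j, π j) :
    ∫⁻ x, ∏ i, G i x ^ (c i * ε) * U i x ^ a i ∂Measure.pi μ ≤
      ∏ i, (∫⋯∫⁻_(S i), G i ∂μ) x₀ ^ (c i * ε) * (∫⁻ x, U i x ∂Measure.pi μ) ^ a i := by
  simp_rw [prod_mul_distrib, ENNReal.rpow_mul, ENNReal.prod_rpow_of_nonneg hε]
  calc ∫⁻ x, (∏ i, G i x ^ c i) ^ ε * ∏ i, U i x ^ a i ∂Measure.pi μ
      ≤ (∫⁻ x, ∏ i, G i x ^ c i ∂Measure.pi μ) ^ ε *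
          ∏ i, (∫⁻ x, U i x ∂Measure.pi μ) ^ a i :=
        lintegral_rpow_mul_prod_rpow_le
          (Finset.measurable_prod _ fun i _ => (hG i).pow_const _).aemeasurable
          (fun i => (hU i).aemeasurable) hε ha hεa
    _ ≤ (∏ i, (∫⋯∫⁻_(S i), G i ∂μ) x₀ ^ c i) ^ ε *
          ∏ i, (∫⁻ x, U i x ∂Measure.pi μ) ^ a i := by
        gcongr
        exact lintegral_prod_rpow_le_prod_lmarginal hG hGS hc0 hc x₀

end PiMeasure

section MixedNorm

variable {δ : Type*} [Fintype δ] [DecidableEq δ] {π : δ → Type*} [∀ j, MeasurableSpace (π j)]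

variable (μ : ∀ j, Measure (π j)) in
noncomputable def innerNorm (S : Finset δ) (q : ℝ≥0∞) (f : (∀ j, π j) → ℝ≥0∞)
    (x : ∀ j, π j) : ℝ≥0∞ :=
  eNorm (Measure.pi fun j : (Sᶜ : Finset δ) => μ j) q fun b => f (updateFinset x Sᶜ b)

variable (μ : ∀ j, Measure (π j)) in
/-- Since `innerNorm` depends only on the coordinates in `S`, the base point `x₀` does not
matter. -/
noncomputable def mixedNorm (S : Finset δ) (p q : ℝ≥0∞) (f : (∀ j, π j) → ℝ≥0∞)
    (x₀ : ∀ j, π j) : ℝ≥0∞ :=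
  eNorm (Measure.pi fun j : S => μ j) p fun a => innerNorm μ S q f (updateFinset x₀ S a)

variable {μ : ∀ j, Measure (π j)} {S : Finset δ} {p q s : ℝ≥0∞} {f : (∀ j, π j) → ℝ≥0∞}

theorem dependsOn_innerNorm : DependsOn (innerNorm μ S q f) S := fun x y hxy =>
  congrArg (eNorm _ q) <| funext fun b => congrArg f <| funext fun j => by
    simp only [Function.updateFinset]
    split_ifs with hj
    · rfl
    · exact hxy j (by simpa using hj)

theorem innerNorm_updateFinset_compl (x : ∀ j, π j) (b : ∀ j : (Sᶜ : Finset δ), π j) :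
    innerNorm μ S q f (updateFinset x Sᶜ b) = innerNorm μ S q f x :=
  dependsOn_innerNorm.apply_updateFinset_of_disjoint disjoint_compl_right x b

theorem innerNorm_rpow_toReal (hq0 : q ≠ 0) (hq : q ≠ ∞) (x : ∀ j, π j) :
    innerNorm μ S q f x ^ q.toReal = (∫⋯∫⁻_Sᶜ, (fun z => f z ^ q.toReal) ∂μ) x :=
  eNorm_rpow_toReal hq0 hq

theorem mixedNorm_rpow_toReal (hp0 : p ≠ 0) (hp : p ≠ ∞) (x₀ : ∀ j, π j) :
    mixedNorm μ S p q f x₀ ^ p.toReal =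
      (∫⋯∫⁻_S, (fun x => innerNorm μ S q f x ^ p.toReal) ∂μ) x₀ :=
  eNorm_rpow_toReal hp0 hp

variable [∀ j, SigmaFinite (μ j)]

theorem measurable_innerNorm (hf : Measurable f) : Measurable (innerNorm μ S q f) :=
  Measurable.eNorm_prod_right (hf.comp measurable_updateFinset')

theorem ae_eq_zero_of_mixedNorm_eq_zero (hp : p ≠ 0) (hq : q ≠ 0) (hf : Measurable f)
    (x₀ : ∀ j, π j) (h : mixedNorm μ S p q f x₀ = 0) : ∀ᵐ x ∂Measure.pi μ, f x = 0 := by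
  refine ae_pi_of_ae_updateFinset (measurableSet_eq_fun hf measurable_const) S x₀ ?_
  filter_upwards [ae_eq_zero_of_eNorm_eq_zero hp
    ((measurable_innerNorm hf).comp measurable_updateFinset) h] with a ha
  exact ae_eq_zero_of_eNorm_eq_zero hq (hf.comp measurable_updateFinset) ha

theorem lintegral_rpow_mul_innerNorm_rpow_le (hq0 : q ≠ 0) (hq : q ≠ ∞) (hf : Measurable f)
    (r : ℝ) (x₀ : ∀ j, π j) :
    ∫⁻ x, innerNorm μ S q f x ^ (r - q.toReal) * f x ^ q.toReal ∂Measure.pi μ ≤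
      (∫⋯∫⁻_S, (fun x => innerNorm μ S q f x ^ r) ∂μ) x₀ := by
  have hF := measurable_innerNorm (μ := μ) (S := S) (q := q) hf
  rw [lintegral_eq_lmarginal_univ x₀, ← union_compl S,
    lmarginal_union μ _ (by fun_prop) disjoint_compl_right]
  refine lmarginal_mono (fun x => ?_) x₀
  rw [lmarginal_mul_of_dependsOn (fun y z hyz => by rw [dependsOn_innerNorm hyz])
    (hf.pow_const _) disjoint_compl_right, ← innerNorm_rpow_toReal hq0 hq]
  exact (ENNReal.rpow_mul_rpow_le_rpow_add _ _ _).trans_eq (by rw [sub_add_cancel])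

theorem ae_le_mul_rpow_mul_rpow (hp : p⁻¹ = q⁻¹ + s) (hq : q ≠ 0) (hs : s ≠ ∞)
    (hf : Measurable f) (x₀ : ∀ j, π j) (hA : mixedNorm μ S p q f x₀ ≠ ∞) :
    ∀ᵐ x ∂Measure.pi μ, f x ≤ (if p = ∞ then mixedNorm μ S p q f x₀ else 1) *
      ((innerNorm μ S q f x ^ p.toReal) ^ s.toReal *
        (innerNorm μ S q f x ^ (p.toReal - q.toReal) * f x ^ q.toReal) ^ (q⁻¹).toReal) := by
  have hF := measurable_innerNorm (μ := μ) (S := S) (q := q) hf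
  refine ae_pi_of_ae_updateFinset (measurableSet_le hf (by fun_prop)) S x₀ ?_
  by_cases hp_top : p = ∞
  · obtain ⟨rfl, rfl⟩ := (ENNReal.eq_top_iff_of_inv_eq_inv_add hp).1 hp_top
    subst hp_top
    filter_upwards [ae_le_eNorm_top (g := fun a => innerNorm μ S ∞ f (updateFinset x₀ S a))]
      with a ha
    filter_upwards [ae_le_eNorm_top] with b hb
    simp only [if_true, ENNReal.toReal_top, ENNReal.inv_top, ENNReal.toReal_zero,
      ENNReal.rpow_zero, mul_one]
    exact hb.trans ha
  have hp0 := ENNReal.ne_zero_of_inv_eq_inv_add hq hs hp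
  have hr := ENNReal.toReal_mul_toReal_inv_add hq hs hp hp_top
  filter_upwards [ae_ne_top_of_eNorm_ne_top hp0 hp_top (hF.comp measurable_updateFinset) hA]
    with a ha
  simp only [if_neg hp_top, one_mul, innerNorm_updateFinset_compl]
  by_cases hq_top : q = ∞
  · subst hq_top
    filter_upwards [ae_le_eNorm_top] with b hb
    simp only [ENNReal.inv_top, ENNReal.toReal_zero, zero_add, ENNReal.rpow_zero, mul_one,
      ← ENNReal.rpow_mul] at hr ⊢
    rwa [hr, ENNReal.rpow_one]
  by_cases h0 : innerNorm μ S q f (updateFinset x₀ S a) = 0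
  · filter_upwards [ae_eq_zero_of_eNorm_eq_zero hq (hf.comp measurable_updateFinset) h0]
      with b hb
    simp only [Function.comp_apply] at hb
    simp [hb]
  · refine .of_forall fun b => ?_
    rw [ENNReal.toReal_inv] at hr ⊢
    rw [ENNReal.rpow_rpow_mul_mul_rpow_rpow_inv h0 ha (ENNReal.toReal_pos hq hq_top) hr]

theorem mul_rpow_mul_rpow_le_mixedNorm (hp : p⁻¹ = q⁻¹ + s) (hq : q ≠ 0) (hs : s ≠ ∞)
    (hf : Measurable f) (x₀ : ∀ j, π j) :
    (if p = ∞ then mixedNorm μ S p q f x₀ else 1) *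
      ((∫⋯∫⁻_S, (fun x => innerNorm μ S q f x ^ p.toReal) ∂μ) x₀ ^ s.toReal *
        (∫⁻ x, innerNorm μ S q f x ^ (p.toReal - q.toReal) * f x ^ q.toReal ∂Measure.pi μ) ^
          (q⁻¹).toReal) ≤ mixedNorm μ S p q f x₀ := by
  by_cases hp_top : p = ∞
  · obtain ⟨rfl, rfl⟩ := (ENNReal.eq_top_iff_of_inv_eq_inv_add hp).1 hp_top
    simp [hp_top]
  have hp0 := ENNReal.ne_zero_of_inv_eq_inv_add hq hs hp
  have hr := ENNReal.toReal_mul_toReal_inv_add hq hs hp hp_top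
  rw [if_neg hp_top, one_mul, ← mixedNorm_rpow_toReal hp0 hp_top]
  set A := mixedNorm μ S p q f x₀
  have hU : (∫⁻ x, innerNorm μ S q f x ^ (p.toReal - q.toReal) * f x ^ q.toReal
      ∂Measure.pi μ) ^ (q⁻¹).toReal ≤ (A ^ p.toReal) ^ (q⁻¹).toReal := by
    by_cases hq_top : q = ∞
    · simp [hq_top]
    · gcongr
      rw [mixedNorm_rpow_toReal hp0 hp_top]
      exact lintegral_rpow_mul_innerNorm_rpow_le hq hq_top hf _ x₀
  calc (A ^ p.toReal) ^ s.toReal * _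
      ≤ (A ^ p.toReal) ^ s.toReal * (A ^ p.toReal) ^ (q⁻¹).toReal := by gcongr
    _ = A := by
      rw [← ENNReal.rpow_mul, ← ENNReal.rpow_mul,
        ← ENNReal.rpow_add_of_nonneg _ _ (by positivity) (by positivity), ← mul_add, add_comm, hr,
        ENNReal.rpow_one]

end MixedNorm

section BleiPopaSinnamon

variable {δ : Type*} [Fintype δ] [DecidableEq δ] {π : δ → Type*} [∀ j, MeasurableSpace (π j)]
  {μ : ∀ j, Measure (π j)} [∀ j, SigmaFinite (μ j)] {ι : Type*} [Fintype ι]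
  {S : ι → Finset δ} {q : ι → ℝ≥0∞} {c : ι → ℝ≥0} {f : ι → (∀ j, π j) → ℝ≥0∞}

theorem lintegral_prod_le_prod_mixedNorm_of_ne_top (hq : ∀ i, q i ≠ 0)
    (hq1 : ∑ i, (q i)⁻¹ ≤ 1) (hc : ∀ j, ∑ i with j ∈ S i, c i = 1) (hf : ∀ i, Measurable (f i))
    (x₀ : ∀ j, π j)
    (hA : ∀ i, mixedNorm μ (S i) ((q i)⁻¹ + c i * (1 - ∑ i', (q i')⁻¹))⁻¹ (q i) (f i) x₀ ≠ ∞) :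
    ∫⁻ x, ∏ i, f i x ∂Measure.pi μ ≤
      ∏ i, mixedNorm μ (S i) ((q i)⁻¹ + c i * (1 - ∑ i', (q i')⁻¹))⁻¹ (q i) (f i) x₀ := by
  set ε : ℝ≥0∞ := 1 - ∑ i', (q i')⁻¹
  set p : ι → ℝ≥0∞ := fun i => ((q i)⁻¹ + c i * ε)⁻¹
  set A : ι → ℝ≥0∞ := fun i => mixedNorm μ (S i) (p i) (q i) (f i) x₀
  set B : ι → ℝ≥0∞ := fun i => if p i = ∞ then A i else 1
  set F : ι → (∀ j, π j) → ℝ≥0∞ := fun i => innerNorm μ (S i) (q i) (f i)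
  set G : ι → (∀ j, π j) → ℝ≥0∞ := fun i x => F i x ^ (p i).toReal
  set U : ι → (∀ j, π j) → ℝ≥0∞ := fun i x =>
    F i x ^ ((p i).toReal - (q i).toReal) * f i x ^ (q i).toReal
  have hp : ∀ i, (p i)⁻¹ = (q i)⁻¹ + c i * ε := fun i => inv_inv _
  have hs : ∀ i, (c i : ℝ≥0∞) * ε ≠ ∞ := fun i => ENNReal.coe_mul_one_sub_ne_top _ _
  have hs_toReal : ∀ i, ((c i : ℝ≥0∞) * ε).toReal = c i * ε.toReal := fun i => by
    rw [ENNReal.toReal_mul, ENNReal.coe_toReal]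
  have hεa : ε.toReal + ∑ i, ((q i)⁻¹).toReal = 1 := by
    rw [ENNReal.toReal_sub_of_le hq1 ENNReal.one_ne_top, ENNReal.toReal_one,
      ENNReal.toReal_sum fun i _ => ENNReal.inv_ne_top.2 (hq i), sub_add_cancel]
  have hB : ∏ i, B i ≠ ∞ := ENNReal.prod_ne_top fun i _ => by
    unfold B
    split_ifs
    exacts [hA i, ENNReal.one_ne_top]
  have hF : ∀ i, Measurable (F i) := fun i => measurable_innerNorm (hf i)
  calc ∫⁻ x, ∏ i, f i x ∂Measure.pi μ
      ≤ ∫⁻ x, ∏ i, B i * (G i x ^ (c i * ε.toReal) * U i x ^ ((q i)⁻¹).toReal)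
          ∂Measure.pi μ := by
        refine lintegral_mono_ae ?_
        filter_upwards [ae_all_iff.2 fun i =>
          ae_le_mul_rpow_mul_rpow (hp i) (hq i) (hs i) (hf i) x₀ (hA i)] with x hx
        exact prod_le_prod' fun i _ => (hx i).trans_eq (by rw [hs_toReal])
    _ = (∏ i, B i) * ∫⁻ x, ∏ i, G i x ^ (c i * ε.toReal) * U i x ^ ((q i)⁻¹).toReal
          ∂Measure.pi μ := by
        simp_rw [prod_mul_distrib]
        exact lintegral_const_mul' _ _ hB
    _ ≤ (∏ i, B i) * ∏ i, (∫⋯∫⁻_(S i), G i ∂μ) x₀ ^ (c i * ε.toReal) *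
          (∫⁻ x, U i x ∂Measure.pi μ) ^ ((q i)⁻¹).toReal := by
        gcongr
        exact lintegral_prod_rpow_mul_rpow_le (fun i => (hF i).pow_const _)
          (fun i x y hxy => by simp only [F, dependsOn_innerNorm hxy])
          (fun i => (c i).coe_nonneg) (fun j => by exact_mod_cast hc j) (fun i => by fun_prop)
          ENNReal.toReal_nonneg (fun i => ENNReal.toReal_nonneg) hεa x₀
    _ ≤ ∏ i, A i := by
        rw [← prod_mul_distrib]
        refine prod_le_prod' fun i _ => ?_
        rw [← hs_toReal]
        exact mul_rpow_mul_rpow_le_mixedNorm (hp i) (hq i) (hs i) (hf i) x₀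

theorem lintegral_prod_le_prod_mixedNorm (hq : ∀ i, q i ≠ 0) (hq1 : ∑ i, (q i)⁻¹ ≤ 1)
    (hc : ∀ j, ∑ i with j ∈ S i, c i = 1) (hf : ∀ i, Measurable (f i)) (x₀ : ∀ j, π j) :
    ∫⁻ x, ∏ i, f i x ∂Measure.pi μ ≤
      ∏ i, mixedNorm μ (S i) ((q i)⁻¹ + c i * (1 - ∑ i', (q i')⁻¹))⁻¹ (q i) (f i) x₀ := by
  classical
  set A : ι → ℝ≥0∞ := fun i =>
    mixedNorm μ (S i) ((q i)⁻¹ + c i * (1 - ∑ i', (q i')⁻¹))⁻¹ (q i) (f i) x₀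
  by_cases h0 : ∃ i, A i = 0
  · obtain ⟨i, hi⟩ := h0
    have hp0 : ((q i)⁻¹ + c i * (1 - ∑ i', (q i')⁻¹))⁻¹ ≠ 0 :=
      ENNReal.ne_zero_of_inv_eq_inv_add (hq i) (ENNReal.coe_mul_one_sub_ne_top _ _) (inv_inv _)
    have hfi := ae_eq_zero_of_mixedNorm_eq_zero hp0 (hq i) (hf i) x₀ hi
    calc ∫⁻ x, ∏ i, f i x ∂Measure.pi μ = 0 := by
          refine (lintegral_congr_ae ?_).trans lintegral_zero
          filter_upwards [hfi] with x hx
          exact prod_eq_zero (mem_univ i) hx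
      _ ≤ ∏ i, A i := zero_le
  by_cases h_top : ∃ i, A i = ∞
  · obtain ⟨i, hi⟩ := h_top
    push Not at h0
    rw [← prod_erase_mul univ A (mem_univ i), hi,
      ENNReal.mul_top (prod_ne_zero_iff.2 fun i _ => h0 i)]
    exact le_top
  push Not at h_top
  exact lintegral_prod_le_prod_mixedNorm_of_ne_top hq hq1 hc hf x₀ h_top

end BleiPopaSinnamon

theorem glue_eq_updateFinset {n : ℕ} {X : Fin n → Type*} (E : Finset (Fin n)) (x₀ : ∀ j, X j)
    (a : ∀ j : E, X j) (b : ∀ j : (Eᶜ : Finset (Fin n)), X j) :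
    glue E a b = updateFinset (updateFinset x₀ E a) Eᶜ b := by
  funext j
  by_cases hj : j ∈ E <;> simp [glue, updateFinset, hj]

theorem blei_popa_sinnamon_general {n M : ℕ}
    (S : Fin M → Finset (Fin n))
    (q : Fin M → ℝ≥0∞) (hq : ∀ i, 0 < q i) (hq1 : ∑ i : Fin M, (q i)⁻¹ ≤ 1)
    (c : Fin M → ℝ≥0)
    (hc : ∀ j : Fin n, ∑ i ∈ Finset.univ.filter (fun i => j ∈ S i), c i = 1)
    {X : Fin n → Type*} [∀ j, MeasurableSpace (X j)]
    (μ : ∀ j, Measure (X j)) [∀ j, SigmaFinite (μ j)]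
    (f : Fin M → (∀ j, X j) → ℝ≥0∞) (hf : ∀ i, Measurable (f i)) :
    ∫⁻ x, ∏ i : Fin M, f i x ∂(Measure.pi μ) ≤
      ∏ i : Fin M,
        eNorm (Measure.pi fun j : S i => μ j)
          ((q i)⁻¹ + (c i : ℝ≥0∞) * (1 - ∑ i' : Fin M, (q i')⁻¹))⁻¹
          (fun a => eNorm (Measure.pi fun j : ((S i)ᶜ : Finset (Fin n)) => μ j) (q i)
            (fun b => f i (glue (S i) a b))) := by
  rcases isEmpty_or_nonempty (∀ j, X j) with _ | ⟨⟨x₀⟩⟩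
  · simp
  · simpa only [mixedNorm, innerNorm, ← glue_eq_updateFinset _ x₀] using
      lintegral_prod_le_prod_mixedNorm (fun i => (hq i).ne') hq1 hc hf x₀

/-- Combined Blei–Popa–Sinnamon inequality: with `S₁, …, S_M` enumerating the size-`k`
subsets of `{1, …, n}` (`M = C(n,k)`, `0 < k < n`), exponents `q₁, …, q_M ∈ (0,∞]` with
`Σ 1/qᵢ ≤ 1`, `ε = 1 − Σ 1/qᵢ`, and nonnegative weights `cᵢ` with `Σ_{Sᵢ ∋ j} cᵢ = 1`
for every `j`, setting `1/pᵢ = 1/qᵢ + cᵢ ε` one has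
`∫ f₁ ⋯ f_M ≤ ∏ᵢ (∫_{Sᵢ} (∫_{∼Sᵢ} fᵢ^{qᵢ})^{pᵢ/qᵢ})^{1/pᵢ}`, the inner norm being
over the variables in `∼Sᵢ` and the outer over those in `Sᵢ`, with `∞` exponents
interpreted as essential suprema. -/
theorem blei_popa_sinnamon {n k M : ℕ} (hk : 0 < k) (hkn : k < n)
    (hM : M = n.choose k)
    (S : Fin M → Finset (Fin n)) (hcard : ∀ i, (S i).card = k)
    (henum : ∀ s : Finset (Fin n), s.card = k → ∃! i : Fin M, S i = s)
    (q : Fin M → ℝ≥0∞) (hq : ∀ i, 0 < q i) (hq1 : ∑ i : Fin M, (q i)⁻¹ ≤ 1)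
    (c : Fin M → ℝ≥0)
    (hc : ∀ j : Fin n, ∑ i ∈ Finset.univ.filter (fun i => j ∈ S i), c i = 1)
    {X : Fin n → Type*} [∀ j, MeasurableSpace (X j)]
    (μ : ∀ j, Measure (X j)) [∀ j, SigmaFinite (μ j)]
    (f : Fin M → (∀ j, X j) → ℝ≥0∞) (hf : ∀ i, Measurable (f i)) :
    ∫⁻ x, ∏ i : Fin M, f i x ∂(Measure.pi μ) ≤
      ∏ i : Fin M,
        eNorm (Measure.pi fun j : S i => μ j)
          ((q i)⁻¹ + (c i : ℝ≥0∞) * (1 - ∑ i' : Fin M, (q i')⁻¹))⁻¹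
          (fun a => eNorm (Measure.pi fun j : ((S i)ᶜ : Finset (Fin n)) => μ j) (q i)
            (fun b => f i (glue (S i) a b))) :=
  blei_popa_sinnamon_general S q hq hq1 c hc μ f hf
end

section
/- Let x = x_{i,j,k,l} be a quadruply-indexed collection of nonnegative real numbers, each index ranging over an at most countable set. Define A = (Σ_{k,l} (Σ_{i,j} x^{12})^{1/4})^{1/3} · (Σ_{i,j} (Σ_{k,l} x^{12})^{1/4})^{1/3}, B = (Σ_{j,l} (Σ_{i,k} x^{12})^{1/3})^{1/4} · (Σ_{i,k} (Σ_{j,l} x^{12})^{1/3})^{1/4}, and C = (Σ_{j,k} (Σ_{i,l} x^{12})^{1/2})^{1/6} · (Σ_{i,l} (Σ_{j,k} x^{12})^{1/2})^{1/6}. Then Σ_{i,j,k,l} x^{6} ≤ A·B·C. -/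
/-!
Write `x⁶` as a product of six copies of `x` and apply Hölder's inequality in `l`, `k`, `j`, `i`
in turn: for every index the six factors carry the exponents `12, 12, 12, 3, 4, 6`, whose
reciprocals sum to one. This bounds `∑ x⁶` by a product of six mixed norms of `x`, all taken in
the order `i, j, k, l`, each with exponent `12` on one pair of indices and `3`, `4` or `6` on the
complementary pair. Minkowski's integral inequality lets an index carrying the smaller exponent
move outward; after these moves the six mixed norms are exactly the six factors of `A·B·C`.
-/

open scoped ENNReal
open MeasureTheory

noncomputable def tsumNorm {α : Type*} (p : ℝ) (f : α → ℝ≥0∞) : ℝ≥0∞ :=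
  (∑' a, f a ^ p) ^ p⁻¹

section TsumNorm

variable {α β ι : Type*} {p q : ℝ}

theorem tsumNorm_mono (hp : 0 ≤ p) {f g : α → ℝ≥0∞} (h : ∀ a, f a ≤ g a) :
    tsumNorm p f ≤ tsumNorm p g :=
  ENNReal.rpow_le_rpow (ENNReal.tsum_le_tsum fun a => ENNReal.rpow_le_rpow (h a) hp)
    (inv_nonneg.2 hp)

theorem tsumNorm_rpow (hp : p ≠ 0) (f : α → ℝ≥0∞) : tsumNorm p f ^ p = ∑' a, f a ^ p :=
  ENNReal.rpow_inv_rpow hp _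

theorem tsumNorm_rpow_div (hp : p ≠ 0) (f : α → ℝ≥0∞) :
    tsumNorm (q / p) (fun a => f a ^ p) = tsumNorm q f ^ p := by
  simp only [tsumNorm, ← ENNReal.rpow_mul, mul_div_cancel₀ q hp, inv_div]
  rw [div_eq_inv_mul]

theorem tsumNorm_zero (hp : 0 < p) : tsumNorm p (0 : α → ℝ≥0∞) = 0 := by
  simp [tsumNorm, ENNReal.zero_rpow_of_pos hp, hp]

theorem tsum_prod_le_prod_tsumNorm (s : Finset ι) (f : ι → α → ℝ≥0∞) {p : ι → ℝ}
    (hp : ∀ i ∈ s, 0 < p i) (hs : ∑ i ∈ s, (p i)⁻¹ = 1) :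
    ∑' a, ∏ i ∈ s, f i a ≤ ∏ i ∈ s, tsumNorm (p i) (f i) := by
  let _ : MeasurableSpace α := ⊤
  calc ∑' a, ∏ i ∈ s, f i a = ∫⁻ a, ∏ i ∈ s, (f i a ^ p i) ^ (p i)⁻¹ ∂Measure.count := by
        rw [lintegral_count]
        exact tsum_congr fun a => Finset.prod_congr rfl fun i hi =>
          (ENNReal.rpow_rpow_inv (hp i hi).ne' _).symm
    _ ≤ ∏ i ∈ s, (∫⁻ a, f i a ^ p i ∂Measure.count) ^ (p i)⁻¹ :=
        ENNReal.lintegral_prod_norm_pow_le s (fun _ _ => Measurable.of_discrete.aemeasurable) hs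
          fun i hi => (inv_pos.2 (hp i hi)).le
    _ = ∏ i ∈ s, tsumNorm (p i) (f i) := by simp only [lintegral_count, tsumNorm]

theorem tsumNorm_add_le (hp : 1 ≤ p) (f g : α → ℝ≥0∞) :
    tsumNorm p (f + g) ≤ tsumNorm p f + tsumNorm p g := by
  let _ : MeasurableSpace α := ⊤
  simpa only [lintegral_count, tsumNorm, one_div] using
    ENNReal.lintegral_Lp_add_le (μ := Measure.count) (Measurable.of_discrete (f := f)).aemeasurable
      (Measurable.of_discrete (f := g)).aemeasurable hp

theorem tsumNorm_finset_sum_le (hp : 1 ≤ p) (s : Finset ι) (f : ι → α → ℝ≥0∞) :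
    tsumNorm p (fun a => ∑ i ∈ s, f i a) ≤ ∑ i ∈ s, tsumNorm p (f i) := by
  simpa only [Finset.sum_fn] using Finset.le_sum_of_subadditive (tsumNorm p)
    (tsumNorm_zero (zero_lt_one.trans_le hp)).le (tsumNorm_add_le hp) s f

theorem ENNReal.tsum_iSup_of_monotone [Preorder ι] [IsDirectedOrder ι] {f : α → ι → ℝ≥0∞}
    (hf : ∀ a, Monotone (f a)) : ∑' a, iSup (f a) = ⨆ i, ∑' a, f a i := by
  simp only [ENNReal.tsum_eq_iSup_sum, ENNReal.finsetSum_iSup_of_monotone hf]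
  exact iSup_comm

theorem tsumNorm_iSup_of_monotone [Preorder ι] [IsDirectedOrder ι] (hp : 0 < p)
    {f : α → ι → ℝ≥0∞} (hf : ∀ a, Monotone (f a)) :
    tsumNorm p (fun a => iSup (f a)) = ⨆ i, tsumNorm p (fun a => f a i) := by
  have hpow : ∀ a, iSup (f a) ^ p = ⨆ i, f a i ^ p :=
    fun a => (ENNReal.orderIsoRpow p hp).map_iSup (f a)
  simp only [tsumNorm, hpow]
  rw [ENNReal.tsum_iSup_of_monotone fun a _ _ hij => ENNReal.rpow_le_rpow (hf a hij) hp.le]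
  exact (ENNReal.orderIsoRpow p⁻¹ (inv_pos.2 hp)).map_iSup _

theorem tsumNorm_tsum_le (hp : 1 ≤ p) (f : ι → α → ℝ≥0∞) :
    tsumNorm p (fun a => ∑' i, f i a) ≤ ∑' i, tsumNorm p (f i) := by
  classical
  simp only [ENNReal.tsum_eq_iSup_sum (f := fun i => f i _)]
  rw [tsumNorm_iSup_of_monotone (zero_lt_one.trans_le hp)
    fun a _ _ hst => Finset.sum_le_sum_of_subset hst]
  exact iSup_le fun s => (tsumNorm_finset_sum_le hp s f).trans (ENNReal.sum_le_tsum s)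

theorem tsumNorm_comm_le (hp : 0 < p) (hpq : p ≤ q) (f : α → β → ℝ≥0∞) :
    tsumNorm q (fun b => tsumNorm p fun a => f a b) ≤ tsumNorm p fun a => tsumNorm q (f a) :=
  calc tsumNorm q (fun b => tsumNorm p fun a => f a b)
      = tsumNorm (q / p) (fun b => ∑' a, f a b ^ p) ^ p⁻¹ := by
        rw [← ENNReal.rpow_rpow_inv hp.ne' (tsumNorm q _), ← tsumNorm_rpow_div hp.ne']
        simp only [tsumNorm_rpow hp.ne']
    _ ≤ (∑' a, tsumNorm (q / p) fun b => f a b ^ p) ^ p⁻¹ :=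
        ENNReal.rpow_le_rpow (tsumNorm_tsum_le ((one_le_div hp).2 hpq) _) (inv_nonneg.2 hp.le)
    _ = tsumNorm p fun a => tsumNorm q (f a) := by
        simp only [tsumNorm_rpow_div hp.ne']
        rfl

end TsumNorm

section MixedNorm

variable {A B C D ι : Type*}

noncomputable def mixedNorm4 (e : Fin 4 → ℝ) (y : A → B → C → D → ℝ≥0∞) : ℝ≥0∞ :=
  tsumNorm (e 0) fun a => tsumNorm (e 1) fun b => tsumNorm (e 2) fun c => tsumNorm (e 3) (y a b c)

theorem tsum_prod_le_prod_mixedNorm4 (s : Finset ι) (y : ι → A → B → C → D → ℝ≥0∞)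
    (e : ι → Fin 4 → ℝ) (he : ∀ n, ∀ m ∈ s, 0 < e m n) (hs : ∀ n, ∑ m ∈ s, (e m n)⁻¹ = 1) :
    ∑' a, ∑' b, ∑' c, ∑' d, ∏ m ∈ s, y m a b c d ≤ ∏ m ∈ s, mixedNorm4 (e m) (y m) :=
  (ENNReal.tsum_le_tsum fun _ => (ENNReal.tsum_le_tsum fun _ =>
    (ENNReal.tsum_le_tsum fun _ => tsum_prod_le_prod_tsumNorm s _ (he 3) (hs 3)).trans
      (tsum_prod_le_prod_tsumNorm s _ (he 2) (hs 2))).trans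
        (tsum_prod_le_prod_tsumNorm s _ (he 1) (hs 1))).trans
          (tsum_prod_le_prod_tsumNorm s _ (he 0) (hs 0))

variable (y : A → B → C → D → ℝ≥0∞) {p q : ℝ}

theorem mixedNorm4_ppqq_eq (hp : p ≠ 0) (hq : q ≠ 0) :
    mixedNorm4 ![p, p, q, q] y = (∑' a, ∑' b, (∑' c, ∑' d, y a b c d ^ q) ^ (p / q)) ^ p⁻¹ := by
  simp only [mixedNorm4, tsumNorm, Matrix.cons_val, ← ENNReal.rpow_mul, inv_mul_cancel₀ hp,
    inv_mul_cancel₀ hq, ENNReal.rpow_one, div_eq_inv_mul]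

theorem mixedNorm4_qqpp_le (hp : 0 < p) (hpq : p ≤ q) :
    mixedNorm4 ![q, q, p, p] y ≤ mixedNorm4 ![p, p, q, q] fun c d a b => y a b c d :=
  have hq := hp.le.trans hpq
  calc mixedNorm4 ![q, q, p, p] y
      = tsumNorm q fun a => tsumNorm q fun b => tsumNorm p fun c => tsumNorm p (y a b c) := rfl
    _ ≤ tsumNorm q fun a => tsumNorm p fun c => tsumNorm q fun b => tsumNorm p (y a b c) :=
        tsumNorm_mono hq fun _ => tsumNorm_comm_le hp hpq _
    _ ≤ tsumNorm p fun c => tsumNorm q fun a => tsumNorm q fun b => tsumNorm p (y a b c) :=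
        tsumNorm_comm_le hp hpq _
    _ ≤ tsumNorm p fun c => tsumNorm q fun a => tsumNorm p fun d => tsumNorm q fun b => y a b c d :=
        tsumNorm_mono hp.le fun _ => tsumNorm_mono hq fun _ => tsumNorm_comm_le hp hpq _
    _ ≤ tsumNorm p fun c => tsumNorm p fun d => tsumNorm q fun a => tsumNorm q fun b => y a b c d :=
        tsumNorm_mono hp.le fun _ => tsumNorm_comm_le hp hpq _

theorem mixedNorm4_qpqp_le (hp : 0 < p) (hpq : p ≤ q) :
    mixedNorm4 ![q, p, q, p] y ≤ mixedNorm4 ![p, p, q, q] fun b d a c => y a b c d :=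
  have hq := hp.le.trans hpq
  calc mixedNorm4 ![q, p, q, p] y
      = tsumNorm q fun a => tsumNorm p fun b => tsumNorm q fun c => tsumNorm p (y a b c) := rfl
    _ ≤ tsumNorm q fun a => tsumNorm p fun b => tsumNorm p fun d => tsumNorm q fun c => y a b c d :=
        tsumNorm_mono hq fun _ => tsumNorm_mono hp.le fun _ => tsumNorm_comm_le hp hpq _
    _ ≤ tsumNorm p fun b => tsumNorm q fun a => tsumNorm p fun d => tsumNorm q fun c => y a b c d :=
        tsumNorm_comm_le hp hpq _
    _ ≤ tsumNorm p fun b => tsumNorm p fun d => tsumNorm q fun a => tsumNorm q fun c => y a b c d :=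
        tsumNorm_mono hp.le fun _ => tsumNorm_comm_le hp hpq _

theorem mixedNorm4_pqpq_le (hp : 0 < p) (hpq : p ≤ q) :
    mixedNorm4 ![p, q, p, q] y ≤ mixedNorm4 ![p, p, q, q] fun a c b d => y a b c d :=
  tsumNorm_mono hp.le fun _ => tsumNorm_comm_le hp hpq _

theorem mixedNorm4_qppq_le (hp : 0 < p) (hpq : p ≤ q) :
    mixedNorm4 ![q, p, p, q] y ≤ mixedNorm4 ![p, p, q, q] fun b c a d => y a b c d :=
  calc mixedNorm4 ![q, p, p, q] y
      = tsumNorm q fun a => tsumNorm p fun b => tsumNorm p fun c => tsumNorm q (y a b c) := rfl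
    _ ≤ tsumNorm p fun b => tsumNorm q fun a => tsumNorm p fun c => tsumNorm q (y a b c) :=
        tsumNorm_comm_le hp hpq _
    _ ≤ tsumNorm p fun b => tsumNorm p fun c => tsumNorm q fun a => tsumNorm q (y a b c) :=
        tsumNorm_mono hp.le fun _ => tsumNorm_comm_le hp hpq _

theorem mixedNorm4_pqqp_le (hp : 0 < p) (hpq : p ≤ q) :
    mixedNorm4 ![p, q, q, p] y ≤ mixedNorm4 ![p, p, q, q] fun a d b c => y a b c d :=
  have hq := hp.le.trans hpq
  calc mixedNorm4 ![p, q, q, p] y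
      = tsumNorm p fun a => tsumNorm q fun b => tsumNorm q fun c => tsumNorm p (y a b c) := rfl
    _ ≤ tsumNorm p fun a => tsumNorm q fun b => tsumNorm p fun d => tsumNorm q fun c => y a b c d :=
        tsumNorm_mono hp.le fun _ => tsumNorm_mono hq fun _ => tsumNorm_comm_le hp hpq _
    _ ≤ tsumNorm p fun a => tsumNorm p fun d => tsumNorm q fun b => tsumNorm q fun c => y a b c d :=
        tsumNorm_mono hp.le fun _ => tsumNorm_comm_le hp hpq _

end MixedNorm

theorem quadruple_index_inequality_general {I J K L : Type*}
    (x : I → J → K → L → ℝ≥0∞) :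
    (∑' i, ∑' j, ∑' k, ∑' l, x i j k l ^ (6 : ℝ)) ≤
      ((∑' k, ∑' l, (∑' i, ∑' j, x i j k l ^ (12 : ℝ)) ^ (1 / 4 : ℝ)) ^ (1 / 3 : ℝ) *
          (∑' i, ∑' j, (∑' k, ∑' l, x i j k l ^ (12 : ℝ)) ^ (1 / 4 : ℝ)) ^ (1 / 3 : ℝ)) *
        ((∑' j, ∑' l, (∑' i, ∑' k, x i j k l ^ (12 : ℝ)) ^ (1 / 3 : ℝ)) ^ (1 / 4 : ℝ) *
          (∑' i, ∑' k, (∑' j, ∑' l, x i j k l ^ (12 : ℝ)) ^ (1 / 3 : ℝ)) ^ (1 / 4 : ℝ)) *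
        ((∑' j, ∑' k, (∑' i, ∑' l, x i j k l ^ (12 : ℝ)) ^ (1 / 2 : ℝ)) ^ (1 / 6 : ℝ) *
          (∑' i, ∑' l, (∑' j, ∑' k, x i j k l ^ (12 : ℝ)) ^ (1 / 2 : ℝ)) ^ (1 / 6 : ℝ)) := by
  -- row `m`: the exponents, in the index order `i, j, k, l`, of the `m`-th factor of `A·B·C`
  let e : Fin 6 → Fin 4 → ℝ := ![![12, 12, 3, 3], ![3, 3, 12, 12], ![12, 4, 12, 4],
    ![4, 12, 4, 12], ![12, 6, 6, 12], ![6, 12, 12, 6]]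
  have h12 : (12 : ℝ) ≠ 0 := by norm_num
  calc (∑' i, ∑' j, ∑' k, ∑' l, x i j k l ^ (6 : ℝ))
      = ∑' i, ∑' j, ∑' k, ∑' l, ∏ _m : Fin 6, x i j k l := by simp [ENNReal.rpow_ofNat]
    _ ≤ ∏ m, mixedNorm4 (e m) x := tsum_prod_le_prod_mixedNorm4 _ (fun _ => x) e
        (by intro n m _; fin_cases n <;> fin_cases m <;> norm_num [e])
        (by intro n; fin_cases n <;> norm_num [e, Fin.sum_univ_succ])
    _ ≤ mixedNorm4 ![3, 3, 12, 12] (fun k l i j => x i j k l) * mixedNorm4 ![3, 3, 12, 12] x *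
          mixedNorm4 ![4, 4, 12, 12] (fun j l i k => x i j k l) *
          mixedNorm4 ![4, 4, 12, 12] (fun i k j l => x i j k l) *
          mixedNorm4 ![6, 6, 12, 12] (fun j k i l => x i j k l) *
          mixedNorm4 ![6, 6, 12, 12] (fun i l j k => x i j k l) := by
        rw [Fin.prod_univ_six]
        gcongr
        exacts [mixedNorm4_qqpp_le x (by norm_num) (by norm_num), le_rfl,
          mixedNorm4_qpqp_le x (by norm_num) (by norm_num),
          mixedNorm4_pqpq_le x (by norm_num) (by norm_num),
          mixedNorm4_qppq_le x (by norm_num) (by norm_num),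
          mixedNorm4_pqqp_le x (by norm_num) (by norm_num)]
    _ = _ := by
        simp only [mixedNorm4_ppqq_eq _ three_ne_zero h12, mixedNorm4_ppqq_eq _ four_ne_zero h12,
          mixedNorm4_ppqq_eq _ (by norm_num : (6 : ℝ) ≠ 0) h12]
        norm_num
        ring

/-- For a quadruply-indexed collection `x = x_{i,j,k,l}` of nonnegative (extended-real)
numbers over at most countable index sets, `Σ x⁶ ≤ A·B·C` where `A`, `B`, `C` are the
symmetric geometric-mean factors built from the exponents `(3,4,6)` paired by
complementary pairs of indices. -/
theorem quadruple_index_inequality {I J K L : Type*}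
    [Countable I] [Countable J] [Countable K] [Countable L]
    (x : I → J → K → L → ℝ≥0∞) :
    (∑' i, ∑' j, ∑' k, ∑' l, x i j k l ^ (6 : ℝ)) ≤
      ((∑' k, ∑' l, (∑' i, ∑' j, x i j k l ^ (12 : ℝ)) ^ (1 / 4 : ℝ)) ^ (1 / 3 : ℝ) *
          (∑' i, ∑' j, (∑' k, ∑' l, x i j k l ^ (12 : ℝ)) ^ (1 / 4 : ℝ)) ^ (1 / 3 : ℝ)) *
        ((∑' j, ∑' l, (∑' i, ∑' k, x i j k l ^ (12 : ℝ)) ^ (1 / 3 : ℝ)) ^ (1 / 4 : ℝ) *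
          (∑' i, ∑' k, (∑' j, ∑' l, x i j k l ^ (12 : ℝ)) ^ (1 / 3 : ℝ)) ^ (1 / 4 : ℝ)) *
        ((∑' j, ∑' k, (∑' i, ∑' l, x i j k l ^ (12 : ℝ)) ^ (1 / 2 : ℝ)) ^ (1 / 6 : ℝ) *
          (∑' i, ∑' l, (∑' j, ∑' k, x i j k l ^ (12 : ℝ)) ^ (1 / 2 : ℝ)) ^ (1 / 6 : ℝ)) :=
  quadruple_index_inequality_general x
end
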